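/- In a rooted non-metric tree with a point having uncountably many branches, the weak tree topology is strictly coarser than the metric topology induced by any parametrization Ψ: T → [1,∞]. -/

import Mathlib

variable {T : Type*} [PartialOrder T]

/-- The closed segment `[a,b] = {γ | a∧b ≤ γ ≤ a or a∧b ≤ γ ≤ b}`, where
`wedge a b` is the infimum `a∧b`. -/
def seg (wedge : T → T → T) (a b : T) : Set T :=
  {γ | (wedge a b ≤ γ ∧ γ ≤ a) ∨ (wedge a b ≤ γ ∧ γ ≤ b)}

/-- The half-open segment `]a,b] = [a,b] \ {a}`. -/
def segOC (wedge : T → T → T) (a b : T) : Set T :=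
  seg wedge a b \ {a}

/-- The tangent relation at `τ`: `a ~_τ b ↔ ]τ,a] ∩ ]τ,b] ≠ ∅`. -/
def tangRel (wedge : T → T → T) (τ a b : T) : Prop :=
  (segOC wedge τ a ∩ segOC wedge τ b).Nonempty

/-- The tangent-vector class `[σ]_τ` of `σ` at `τ`, a subset of `T \ {τ}`. -/
def tangClass (wedge : T → T → T) (τ σ : T) : Set T :=
  {α | α ≠ τ ∧ tangRel wedge τ σ α}

open ENNReal in
/-- The distance associated to a parametrization `Ψ : T → [1,∞]`:
`d_Ψ(a,b) = (1/Ψ(a∧b) − 1/Ψ(a)) + (1/Ψ(a∧b) − 1/Ψ(b))`. -/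
noncomputable def dPsi (wedge : T → T → T) (Ψ : T → ℝ≥0∞) (a b : T) : ℝ :=
  ((Ψ (wedge a b))⁻¹.toReal - (Ψ a)⁻¹.toReal) +
    ((Ψ (wedge a b))⁻¹.toReal - (Ψ b)⁻¹.toReal)

/-- The weak tree topology, generated by the tangent-vector classes. -/
def weakTreeTopology (wedge : T → T → T) : TopologicalSpace T :=
  TopologicalSpace.generateFrom {U | ∃ τ σ : T, σ ≠ τ ∧ U = tangClass wedge τ σ}

/-- The topology associated with the metric `d_Ψ`, generated by open balls. -/
noncomputable def dPsiTopology (wedge : T → T → T) (Ψ : T → ENNReal) :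
    TopologicalSpace T :=
  TopologicalSpace.generateFrom
    {B | ∃ (x : T) (ε : ℝ), 0 < ε ∧ B = {y | dPsi wedge Ψ x y < ε}}

/-!
The branches at `τ` are the classes `{b | τ < a ∧ b}` of the points `a > τ`, together with
`{b | ¬ τ ≤ b}` (`mem_tangClass_iff`). Each branch is `d_Ψ`-open: a point closer to `b` than `τ`
is cannot leave the branch of `b`. Conversely, a branch at `τ` containing `σ` contains every
branch at `σ` except the one through `τ`, so every weak neighbourhood of `σ` misses only finitely
many branches at `σ`. As every branch at `σ` leaves each small ball around `σ`, weakly open balls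
`{y | d_Ψ(σ, y) < 1/(n+1)}` would make the set of branches at `σ` countable.
-/

open Set Topology ENNReal

theorem countable_of_finite_not_subset {α ι : Type*} [Countable ι] {S : Set (Set α)}
    (V : ι → Set α) (hfin : ∀ i, {C ∈ S | ¬ C ⊆ V i}.Finite) (hS : ∀ C ∈ S, ∃ i, ¬ C ⊆ V i) :
    S.Countable :=
  (countable_iUnion fun i => (hfin i).countable).mono fun C hC => by
    obtain ⟨i, hi⟩ := hS C hC
    exact mem_iUnion.mpr ⟨i, hC, hi⟩

theorem isChain_Iic_of_orderIso_real
    (h : ∀ c : T, ∃ s : Set ℝ, Nonempty ({x : T // x ≤ c} ≃o s)) (c : T) :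
    IsChain (· ≤ ·) (Iic c) := by
  intro x hx y hy _
  obtain ⟨s, ⟨e⟩⟩ := h c
  exact (le_total (e ⟨x, hx⟩) (e ⟨y, hy⟩)).imp
    (fun h => Subtype.mk_le_mk.mp (e.le_iff_le.mp h))
    (fun h => Subtype.mk_le_mk.mp (e.le_iff_le.mp h))

section Tree

def tangentVectors (wedge : T → T → T) (σ : T) : Set (Set T) :=
  {C | ∃ α : T, α ≠ σ ∧ C = tangClass wedge σ α}

variable {wedge : T → T → T}

theorem le_of_mem_segOC {τ a c : T} (hc : c ∈ segOC wedge τ a) (hτc : τ < c) : c ≤ a := by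
  rcases hc.1 with ⟨-, hcτ⟩ | ⟨-, hca⟩
  · exact absurd hcτ hτc.not_ge
  · exact hca

section Wedge

variable (hw : ∀ a b : T, IsGLB {a, b} (wedge a b))
include hw

theorem wedge_le_left (a b : T) : wedge a b ≤ a :=
  (hw a b).1 (by simp)

theorem wedge_le_right (a b : T) : wedge a b ≤ b :=
  (hw a b).1 (by simp)

theorem le_wedge {a b c : T} (ha : c ≤ a) (hb : c ≤ b) : c ≤ wedge a b :=
  (hw a b).2 (by rintro x (rfl | rfl) <;> assumption)

theorem wedge_comm (a b : T) : wedge a b = wedge b a :=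
  (hw a b).unique (pair_comm a b ▸ hw b a)

theorem wedge_eq_left {a b : T} (h : a ≤ b) : wedge a b = a :=
  (wedge_le_left hw a b).antisymm (le_wedge hw le_rfl h)

theorem wedge_self (a : T) : wedge a a = a :=
  wedge_eq_left hw le_rfl

theorem lt_of_mem_segOC {τ a c : T} (hτa : τ ≤ a) (hc : c ∈ segOC wedge τ a) : τ < c := by
  obtain ⟨hc, hcτ : c ≠ τ⟩ := hc
  rw [seg, wedge_eq_left hw hτa] at hc
  exact lt_of_le_of_ne (hc.elim And.left And.left) hcτ.symm

variable (hch : ∀ c : T, IsChain (· ≤ ·) (Iic c))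
include hch

theorem lt_wedge_trans {τ a b c : T} (hab : τ < wedge a b) (hbc : τ < wedge b c) :
    τ < wedge a c := by
  rcases (hch b).total (wedge_le_right hw a b) (wedge_le_left hw b c) with h | h
  · exact hab.trans_le (le_wedge hw (wedge_le_left hw a b) (h.trans (wedge_le_right hw b c)))
  · exact hbc.trans_le (le_wedge hw (h.trans (wedge_le_left hw a b)) (wedge_le_right hw b c))

theorem mem_tangClass_iff {τ a b : T} :
    b ∈ tangClass wedge τ a ↔ τ < wedge a b ∨ (¬ τ ≤ a ∧ ¬ τ ≤ b) := by
  constructor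
  · rintro ⟨-, c, hca, hcb⟩
    by_cases hτ : τ ≤ a ∨ τ ≤ b
    · have hτc : τ < c := hτ.elim (lt_of_mem_segOC hw · hca) (lt_of_mem_segOC hw · hcb)
      exact Or.inl (hτc.trans_le
        (le_wedge hw (le_of_mem_segOC hca hτc) (le_of_mem_segOC hcb hτc)))
    · exact Or.inr (not_or.mp hτ)
  · rintro (hτ | ⟨hτa, hτb⟩)
    · have hne : wedge a b ≠ τ := hτ.ne'
      have hτ' : ∀ x, wedge τ x ≤ wedge a b := fun x => (wedge_le_left hw τ x).trans hτ.le
      exact ⟨fun h => hτ.not_ge (h ▸ wedge_le_right hw a b), wedge a b,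
        ⟨Or.inr ⟨hτ' a, wedge_le_left hw a b⟩, hne⟩, ⟨Or.inr ⟨hτ' b, wedge_le_right hw a b⟩, hne⟩⟩
    · have hne : ∀ x, ¬ τ ≤ x → wedge τ x ≠ τ := fun x hx h => hx (h ▸ wedge_le_right hw τ x)
      refine ⟨fun h => hτb (h ▸ le_rfl), ?_⟩
      rcases (hch τ).total (wedge_le_left hw τ a) (wedge_le_left hw τ b) with h | h
      · exact ⟨wedge τ b, ⟨Or.inl ⟨h, wedge_le_left hw τ b⟩, hne b hτb⟩,
          ⟨Or.inl ⟨le_rfl, wedge_le_left hw τ b⟩, hne b hτb⟩⟩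
      · exact ⟨wedge τ a, ⟨Or.inl ⟨le_rfl, wedge_le_left hw τ a⟩, hne a hτa⟩,
          ⟨Or.inl ⟨h, wedge_le_left hw τ a⟩, hne a hτa⟩⟩

theorem tangClass_eq_of_mem {σ β τ : T} (h : τ ∈ tangClass wedge σ β) :
    tangClass wedge σ β = tangClass wedge σ τ := by
  ext x
  simp only [mem_tangClass_iff hw hch]
  rcases (mem_tangClass_iff hw hch).mp h with h | ⟨hβ, hτ⟩
  · have hσβ : ¬ (¬ σ ≤ β) := not_not.mpr (h.le.trans (wedge_le_left hw β τ))
    have hστ : ¬ (¬ σ ≤ τ) := not_not.mpr (h.le.trans (wedge_le_right hw β τ))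
    simp only [hσβ, hστ, false_and, or_false]
    exact ⟨lt_wedge_trans hw hch (by rwa [wedge_comm hw]), fun h' => lt_wedge_trans hw hch h h'⟩
  · have hβx : ¬ σ < wedge β x := fun h => hβ (h.le.trans (wedge_le_left hw β x))
    have hτx : ¬ σ < wedge τ x := fun h => hτ (h.le.trans (wedge_le_left hw τ x))
    simp only [hβx, hτx, hβ, hτ, not_false_eq_true, true_and, false_or]

theorem tangClass_subset_of_notMem {τ α σ β : T} (hσ : σ ∈ tangClass wedge τ α)
    (hτ : τ ∉ tangClass wedge σ β) : tangClass wedge σ β ⊆ tangClass wedge τ α := by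
  intro x hx
  rw [mem_tangClass_iff hw hch] at hσ hx ⊢
  obtain ⟨hnot_up, hnot_down⟩ := not_or.mp (mt (mem_tangClass_iff hw hch).mpr hτ)
  rcases hx with hx | ⟨hβ, hσx⟩
  · have hσx : σ ≤ x := hx.le.trans (wedge_le_right hw β x)
    rcases hσ with hσ | ⟨hτα, hτσ⟩
    · exact Or.inl (hσ.trans_le
        (le_wedge hw (wedge_le_left hw α σ) ((wedge_le_right hw α σ).trans hσx)))
    · refine Or.inr ⟨hτα, fun hτx => ?_⟩
      rcases (hch x).total hσx hτx with h | h
      · have hσ_lt : σ < wedge x τ := by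
          rw [wedge_comm hw, wedge_eq_left hw hτx]
          exact lt_of_le_not_ge h hτσ
        exact hnot_up (lt_wedge_trans hw hch hx hσ_lt)
      · exact hτσ h
  · have hστ : σ ≤ τ := not_not.mp fun h => hnot_down ⟨hβ, h⟩
    rcases hσ with hσ | ⟨hτα, -⟩
    · exact absurd (hσ.trans_le (wedge_le_right hw α σ)) hστ.not_gt
    · exact Or.inr ⟨hτα, fun hτx => hσx (hστ.trans hτx)⟩

theorem finite_tangentVectors_not_subset {σ : T} {V : Set T}
    (hV : IsOpen[weakTreeTopology wedge] V) (hσ : σ ∈ V) :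
    {C ∈ tangentVectors wedge σ | ¬ C ⊆ V}.Finite := by
  induction hV with
  | basic U hU =>
    obtain ⟨τ, α, -, rfl⟩ := hU
    refine (finite_singleton (tangClass wedge σ τ)).subset ?_
    rintro C ⟨⟨β, -, rfl⟩, hC⟩
    exact tangClass_eq_of_mem hw hch
      (not_not.mp fun h => hC (tangClass_subset_of_notMem hw hch hσ h))
  | univ => simp
  | inter s t _ _ ihs iht =>
    refine ((ihs hσ.1).union (iht hσ.2)).subset ?_
    rintro C ⟨hC, hCst⟩
    by_cases h : C ⊆ s
    · exact Or.inr ⟨hC, fun h' => hCst (subset_inter h h')⟩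
    · exact Or.inl ⟨hC, h⟩
  | sUnion S hS ih =>
    obtain ⟨U, hU, hσU⟩ := hσ
    exact (ih U hU hσU).subset fun C ⟨hC, hCS⟩ =>
      ⟨hC, fun h => hCS (h.trans (subset_sUnion_of_mem hU))⟩

end Wedge

theorem self_mem_tangClass (hw : ∀ a b : T, IsGLB {a, b} (wedge a b)) {τ α : T} (h : α ≠ τ) :
    α ∈ tangClass wedge τ α :=
  have hα : α ∈ segOC wedge τ α := ⟨Or.inr ⟨wedge_le_right hw τ α, le_rfl⟩, h⟩
  ⟨h, α, hα, hα⟩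

section Metric

variable {Ψ : T → ℝ≥0∞}

noncomputable def psiInv (Ψ : T → ℝ≥0∞) (t : T) : ℝ :=
  (Ψ t)⁻¹.toReal

theorem strictAnti_psiInv (hΨ0 : ∀ t, Ψ t ≠ 0) (hΨ : StrictMono Ψ) : StrictAnti (psiInv Ψ) :=
  fun a _ h =>
    ENNReal.toReal_strict_mono (ENNReal.inv_ne_top.mpr (hΨ0 a)) (ENNReal.inv_lt_inv.mpr (hΨ h))

omit [PartialOrder T] in
theorem dPsi_eq (a b : T) : dPsi wedge Ψ a b =
    (psiInv Ψ (wedge a b) - psiInv Ψ a) + (psiInv Ψ (wedge a b) - psiInv Ψ b) :=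
  rfl

variable (hw : ∀ a b : T, IsGLB {a, b} (wedge a b))
include hw

theorem dPsi_self (a : T) : dPsi wedge Ψ a a = 0 := by
  rw [dPsi_eq, wedge_self hw]
  ring

theorem isOpen_dPsiTopology_of_forall_ball {S : Set T}
    (h : ∀ b ∈ S, ∃ ε > 0, {y | dPsi wedge Ψ b y < ε} ⊆ S) : IsOpen[dPsiTopology wedge Ψ] S := by
  rw [@isOpen_iff_forall_mem_open _ (dPsiTopology wedge Ψ)]
  intro b hb
  obtain ⟨ε, hε, hsub⟩ := h b hb
  refine ⟨_, hsub, .basic _ ⟨b, ε, hε, rfl⟩, ?_⟩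
  show dPsi wedge Ψ b b < ε
  rwa [dPsi_self hw]

variable (hf : StrictAnti (psiInv Ψ))
include hf

theorem dPsi_pos {a b : T} (hab : a ≠ b) : 0 < dPsi wedge Ψ a b := by
  have ha := hf.antitone (wedge_le_left hw a b)
  have hb := hf.antitone (wedge_le_right hw a b)
  rw [dPsi_eq]
  rcases (wedge_le_left hw a b).eq_or_lt with h | h
  · have hlt : wedge a b < b := (wedge_le_right hw a b).lt_of_ne fun h' => hab (h.symm.trans h')
    linarith [hf hlt]
  · linarith [hf h]

variable (hch : ∀ c : T, IsChain (· ≤ ·) (Iic c))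
include hch

theorem lt_wedge_of_dPsi_lt {τ b b' : T} (hτb : τ ≤ b)
    (h : dPsi wedge Ψ b b' < dPsi wedge Ψ τ b) : τ < wedge b b' := by
  have hfar : wedge b b' ≤ τ → dPsi wedge Ψ τ b ≤ dPsi wedge Ψ b b' := fun hle => by
    have h₁ := hf.antitone hle
    have h₂ := hf.antitone (wedge_le_right hw b b')
    rw [dPsi_eq, dPsi_eq, wedge_eq_left hw hτb]
    linarith
  rcases (hch b).total hτb (wedge_le_left hw b b') with hle | hle
  · exact lt_of_le_not_ge hle fun hge => (hfar hge).not_gt h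
  · exact absurd (hfar hle) h.not_ge

theorem dPsi_le_of_le_of_not_le {τ b b' : T} (hτb' : τ ≤ b') (hτb : ¬ τ ≤ b) :
    dPsi wedge Ψ b τ ≤ dPsi wedge Ψ b b' := by
  have hle : wedge b b' ≤ τ := ((hch b').total hτb' (wedge_le_right hw b b')).resolve_left
    fun h => hτb (h.trans (wedge_le_left hw b b'))
  have h₁ := hf.antitone (le_wedge hw (wedge_le_left hw b b') hle)
  have h₂ := hf.antitone hτb'
  rw [dPsi_eq, dPsi_eq]
  linarith

theorem isOpen_tangClass (τ α : T) : IsOpen[dPsiTopology wedge Ψ] (tangClass wedge τ α) := by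
  refine isOpen_dPsiTopology_of_forall_ball hw fun b hb => ?_
  rcases (mem_tangClass_iff hw hch).mp hb with hτ | ⟨hτα, hτb⟩
  · have hτb : τ < b := hτ.trans_le (wedge_le_right hw α b)
    refine ⟨dPsi wedge Ψ τ b, dPsi_pos hw hf hτb.ne, fun b' hb' => ?_⟩
    exact (mem_tangClass_iff hw hch).mpr
      (Or.inl (lt_wedge_trans hw hch hτ (lt_wedge_of_dPsi_lt hw hf hch hτb.le hb')))
  · refine ⟨dPsi wedge Ψ b τ, dPsi_pos hw hf fun h => hτb (h ▸ le_rfl), fun b' hb' => ?_⟩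
    exact (mem_tangClass_iff hw hch).mpr
      (Or.inr ⟨hτα, fun hτb' => (dPsi_le_of_le_of_not_le hw hf hch hτb' hτb).not_gt hb'⟩)

theorem dPsiTopology_le_weakTreeTopology : dPsiTopology wedge Ψ ≤ weakTreeTopology wedge :=
  le_generateFrom fun _ ⟨τ, α, _, hU⟩ => hU ▸ isOpen_tangClass hw hf hch τ α

theorem countable_tangentVectors_of_eq (h : dPsiTopology wedge Ψ = weakTreeTopology wedge)
    (σ : T) : (tangentVectors wedge σ).Countable := by
  refine countable_of_finite_not_subset (fun n : ℕ => {y | dPsi wedge Ψ σ y < 1 / (n + 1)})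
    (fun n => finite_tangentVectors_not_subset hw hch ?_ ?_) ?_
  · exact h ▸ .basic _ ⟨σ, _, Nat.one_div_pos_of_nat, rfl⟩
  · show dPsi wedge Ψ σ σ < _
    rw [dPsi_self hw]
    exact Nat.one_div_pos_of_nat
  · rintro C ⟨α, hα, rfl⟩
    obtain ⟨n, hn⟩ := exists_nat_one_div_lt (dPsi_pos hw hf hα.symm)
    exact ⟨n, fun hsub => (hsub (self_mem_tangClass hw hα)).not_gt hn⟩

end Metric

end Tree

theorem weakTreeTopology_strictly_coarser_general
    -- (T2): down-sets are order-isomorphic to real intervals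
    (hI : ∀ τ : T, ∃ s : Set ℝ, s.OrdConnected ∧
      Nonempty ({σ : T // σ ≤ τ} ≃o s))
    -- (T4'): pairwise infima, realized by `wedge`
    (wedge : T → T → T) (hwedge : ∀ a b : T, IsGLB {a, b} (wedge a b))
    -- `Ψ` is an increasing parametrization with values in `[1,∞]`
    (Ψ : T → ENNReal) (hΨ1 : ∀ t, 1 ≤ Ψ t)
    (hΨstrict : ∀ a b : T, a < b → Ψ a < Ψ b)
    (σ : T)
    (huncount : ¬ Set.Countable {C : Set T | ∃ α : T, α ≠ σ ∧ C = tangClass wedge σ α}) :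
    dPsiTopology wedge Ψ ≤ weakTreeTopology wedge ∧
      dPsiTopology wedge Ψ ≠ weakTreeTopology wedge := by
  have hch : ∀ c : T, IsChain (· ≤ ·) (Iic c) :=
    isChain_Iic_of_orderIso_real fun τ => (hI τ).imp fun _ h => h.2
  have hf : StrictAnti (psiInv Ψ) :=
    strictAnti_psiInv (fun t => (zero_lt_one.trans_le (hΨ1 t)).ne') fun a b => hΨstrict a b
  exact ⟨dPsiTopology_le_weakTreeTopology hwedge hf hch,
    fun h => huncount (countable_tangentVectors_of_eq hwedge hf hch h σ)⟩

/-- in a rooted non-metric tree with a point having uncountably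
many branches, the weak tree topology is strictly coarser than the metric
topology induced by any parametrization `Ψ : T → [1,∞]`. -/
theorem weakTreeTopology_strictly_coarser
    -- (T1): a root
    (τ₀ : T) (hroot : ∀ t : T, τ₀ ≤ t)
    -- (T2): down-sets are order-isomorphic to real intervals
    (hI : ∀ τ : T, ∃ s : Set ℝ, s.OrdConnected ∧
      Nonempty ({σ : T // σ ≤ τ} ≃o s))
    -- (T3): totally ordered convex subsets are order-isomorphic to real intervals
    (hT3 : ∀ C : Set T, IsChain (· ≤ ·) C → C.OrdConnected →
      ∃ s : Set ℝ, s.OrdConnected ∧ Nonempty (C ≃o s))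
    -- (T4'): pairwise infima, realized by `wedge`
    (wedge : T → T → T) (hwedge : ∀ a b : T, IsGLB {a, b} (wedge a b))
    -- `Ψ` is an increasing parametrization with values in `[1,∞]`
    (Ψ : T → ENNReal) (hΨ1 : ∀ t, 1 ≤ Ψ t) (hΨmono : Monotone Ψ)
    (hΨstrict : ∀ a b : T, a < b → Ψ a < Ψ b)
    (hΨsurj : ∀ a b : T, a ≤ b → ∀ c : ENNReal, Ψ a ≤ c → c ≤ Ψ b →
      ∃ t : T, a ≤ t ∧ t ≤ b ∧ Ψ t = c)
    (σ : T)
    (huncount : ¬ Set.Countable {C : Set T | ∃ α : T, α ≠ σ ∧ C = tangClass wedge σ α}) :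
    dPsiTopology wedge Ψ ≤ weakTreeTopology wedge ∧
      dPsiTopology wedge Ψ ≠ weakTreeTopology wedge :=
  weakTreeTopology_strictly_coarser_general hI wedge hwedge Ψ hΨ1 hΨstrict σ huncount
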